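/- arXiv:1809.01430 — 4 statements merged into one kernel-verified Lean document; each statement's English description precedes it below -/
import Mathlib

section
/- Per-bit upper bound for the dual subproblem (Lemma 1, reduction step): if r₁, r₂, r₃ are stationary rates, then for every ℓ ≥ 0 and all t₁, t₂, t₃ > 0 one has Φ(ℓ, t₁, t₂, t₃) ≤ ℓ · M(r₁, r₂, r₃). In particular, if M(r₁, r₂, r₃) ≤ 0 then Φ(ℓ, t₁, t₂, t₃) ≤ 0 for all such (ℓ, t₁, t₂, t₃). -/
open Real

/-- The objective `Φ(ℓ, t₁, t₂, t₃)` of the dual subproblem. -/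
noncomputable def Phi (B beta lam0 lam mu xi C s2 s02 h : ℝ)
    (ℓ t₁ t₂ t₃ : ℝ) : ℝ :=
  ℓ - (lam0 * s2 / h) * t₁ * ((2 : ℝ) ^ (ℓ / (t₁ * B)) - 1)
    - mu * (t₁ + t₂ + t₃)
    - (lam * s02 / h) * t₃ * ((2 : ℝ) ^ (beta * ℓ / (t₃ * B)) - 1)
    - lam * xi * C ^ 3 * ℓ ^ 3 / t₂ ^ 2

/-- The per-bit net gain `M(r₁, r₂, r₃)`. -/
noncomputable def Mgain (B beta lam0 lam mu xi C s2 s02 h : ℝ)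
    (r₁ r₂ r₃ : ℝ) : ℝ :=
  1 - (lam0 * s2 / (h * r₁)) * ((2 : ℝ) ^ (r₁ / B) - 1)
    - mu * (1 / r₁ + 1 / r₂ + 1 / r₃)
    - (lam * s02 / (h * r₃)) * ((2 : ℝ) ^ (beta * r₃ / B) - 1)
    - lam * xi * C ^ 3 * r₂ ^ 2

/-- `r₁, r₂, r₃` are stationary rates. -/
noncomputable def StationaryRates (B beta lam0 lam mu xi C s2 s02 h : ℝ)
    (r₁ r₂ r₃ : ℝ) : Prop :=
  (lam0 * s2 / h) * ((2 : ℝ) ^ (r₁ / B) * (r₁ * Real.log 2 / B - 1) + 1) = mu ∧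
  2 * lam * xi * C ^ 3 * r₂ ^ 3 = mu ∧
  (lam * s02 / h) * ((2 : ℝ) ^ (beta * r₃ / B) * (beta * r₃ * Real.log 2 / B - 1) + 1) = mu


lemma two_rpow_tangent (x y : ℝ) :
    (2:ℝ) ^ y * (1 + (x - y) * Real.log 2) ≤ (2:ℝ) ^ x := by
  have h1 : (2:ℝ) ^ x = (2:ℝ) ^ y * Real.exp ((x - y) * Real.log 2) := by
    rw [Real.rpow_def_of_pos (by norm_num : (0:ℝ) < 2),
        Real.rpow_def_of_pos (by norm_num : (0:ℝ) < 2), ← Real.exp_add]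
    exact congrArg Real.exp (by ring)
  have h2 : (0:ℝ) < (2:ℝ) ^ y := Real.rpow_pos_of_pos (by norm_num) _
  have h3 := Real.add_one_le_exp ((x - y) * Real.log 2)
  rw [h1]
  nlinarith

lemma group_exp (a κ mu r : ℝ) (ha : 0 < a) (hr : 0 < r)
    (hstat : a * ((2:ℝ) ^ (κ * r) * (κ * r * Real.log 2 - 1) + 1) = mu)
    (ℓ t : ℝ) (ht : 0 < t) :
    ℓ / r * (a * ((2:ℝ) ^ (κ * r) - 1) + mu) ≤
      a * t * ((2:ℝ) ^ (κ * ℓ / t) - 1) + mu * t := by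
  set P := (2:ℝ) ^ (κ * r) with hP
  set Q := (2:ℝ) ^ (κ * ℓ / t) with hQ
  have hkey : P * (1 + (κ * ℓ / t - κ * r) * Real.log 2) ≤ Q :=
    two_rpow_tangent (κ * ℓ / t) (κ * r)
  have heq : a * t * (P * (1 + (κ * ℓ / t - κ * r) * Real.log 2) - 1) + mu * t
      = ℓ / r * (a * (P - 1) + mu) := by
    rw [← hstat]; field_simp; ring
  have hat : (0:ℝ) ≤ a * t := by positivity
  calc ℓ / r * (a * (P - 1) + mu)
      = a * t * (P * (1 + (κ * ℓ / t - κ * r) * Real.log 2) - 1) + mu * t := heq.symm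
    _ ≤ a * t * (Q - 1) + mu * t := by nlinarith [mul_le_mul_of_nonneg_left hkey hat]

lemma group_cube (d mu r : ℝ) (hd : 0 < d) (hr : 0 < r)
    (hstat : 2 * d * r ^ 3 = mu)
    (ℓ t : ℝ) (hℓ : 0 ≤ ℓ) (ht : 0 < t) :
    ℓ * (mu * (1 / r) + d * r ^ 2) ≤ d * ℓ ^ 3 / t ^ 2 + mu * t := by
  rw [← hstat, ← sub_nonneg]
  have key : d * ℓ ^ 3 / t ^ 2 + 2 * d * r ^ 3 * t
      - ℓ * (2 * d * r ^ 3 * (1 / r) + d * r ^ 2)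
      = d * ((ℓ - r * t) ^ 2 * (ℓ + 2 * r * t)) / t ^ 2 := by
    field_simp; ring
  rw [key]
  apply div_nonneg _ (by positivity)
  have h1 : (0:ℝ) ≤ ℓ + 2 * r * t := by nlinarith
  exact mul_nonneg hd.le (mul_nonneg (sq_nonneg _) h1)

theorem perBit_upper_bound'
    (B beta lam0 lam mu xi C s2 s02 h : ℝ)
    (hB : 0 < B) (hbeta : 0 < beta) (hlam0 : 0 < lam0) (hlam : 0 < lam)
    (hmu : 0 < mu) (hxi : 0 < xi) (hC : 0 < C) (hs2 : 0 < s2)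
    (hs02 : 0 < s02) (hh : 0 < h)
    (r₁ r₂ r₃ : ℝ) (hr₁ : 0 < r₁) (hr₂ : 0 < r₂) (hr₃ : 0 < r₃)
    (hs1 : (lam0 * s2 / h) * ((2 : ℝ) ^ (r₁ / B) * (r₁ * Real.log 2 / B - 1) + 1) = mu)
    (hs2' : 2 * lam * xi * C ^ 3 * r₂ ^ 3 = mu)
    (hs3 : (lam * s02 / h) * ((2 : ℝ) ^ (beta * r₃ / B) * (beta * r₃ * Real.log 2 / B - 1) + 1) = mu)
    (ℓ : ℝ) (hℓ : 0 ≤ ℓ) (t₁ : ℝ) (ht₁ : 0 < t₁) (t₂ : ℝ) (ht₂ : 0 < t₂)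
    (t₃ : ℝ) (ht₃ : 0 < t₃) :
    ℓ - (lam0 * s2 / h) * t₁ * ((2 : ℝ) ^ (ℓ / (t₁ * B)) - 1)
      - mu * (t₁ + t₂ + t₃)
      - (lam * s02 / h) * t₃ * ((2 : ℝ) ^ (beta * ℓ / (t₃ * B)) - 1)
      - lam * xi * C ^ 3 * ℓ ^ 3 / t₂ ^ 2 ≤
    ℓ * (1 - (lam0 * s2 / (h * r₁)) * ((2 : ℝ) ^ (r₁ / B) - 1)
      - mu * (1 / r₁ + 1 / r₂ + 1 / r₃)
      - (lam * s02 / (h * r₃)) * ((2 : ℝ) ^ (beta * r₃ / B) - 1)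
      - lam * xi * C ^ 3 * r₂ ^ 2) := by
  have ha1 : (0:ℝ) < lam0 * s2 / h := by positivity
  have ha3 : (0:ℝ) < lam * s02 / h := by positivity
  have hd : (0:ℝ) < lam * xi * C ^ 3 := by positivity
  have hstat1 : (lam0 * s2 / h) * ((2:ℝ) ^ ((1/B) * r₁) * ((1/B) * r₁ * Real.log 2 - 1) + 1) = mu := by
    rw [show (1/B) * r₁ = r₁ / B from by ring] at *
    rw [show r₁ / B * Real.log 2 = r₁ * Real.log 2 / B from by ring]
    exact hs1
  have hstat3 : (lam * s02 / h) * ((2:ℝ) ^ ((beta/B) * r₃) * ((beta/B) * r₃ * Real.log 2 - 1) + 1) = mu := by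
    rw [show (beta/B) * r₃ = beta * r₃ / B from by ring] at *
    rw [show beta * r₃ / B * Real.log 2 = beta * r₃ * Real.log 2 / B from by ring]
    exact hs3
  have h1 := group_exp (lam0 * s2 / h) (1/B) mu r₁ ha1 hr₁ hstat1 ℓ t₁ ht₁
  have h3 := group_exp (lam * s02 / h) (beta/B) mu r₃ ha3 hr₃ hstat3 ℓ t₃ ht₃
  have h2 := group_cube (lam * xi * C ^ 3) mu r₂ hd hr₂ (by rw [← hs2']; ring) ℓ t₂ hℓ ht₂
  rw [show (1/B) * r₁ = r₁ / B from by ring,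
      show (1/B) * ℓ / t₁ = ℓ / (t₁ * B) from by ring] at h1
  rw [show (beta/B) * r₃ = beta * r₃ / B from by ring,
      show (beta/B) * ℓ / t₃ = beta * ℓ / (t₃ * B) from by ring] at h3
  have e1 : ℓ / r₁ * ((lam0 * s2 / h) * ((2:ℝ) ^ (r₁ / B) - 1) + mu)
      = ℓ * ((lam0 * s2 / (h * r₁)) * ((2:ℝ) ^ (r₁ / B) - 1)) + ℓ * (mu / r₁) := by
    field_simp
  have e3 : ℓ / r₃ * ((lam * s02 / h) * ((2:ℝ) ^ (beta * r₃ / B) - 1) + mu)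
      = ℓ * ((lam * s02 / (h * r₃)) * ((2:ℝ) ^ (beta * r₃ / B) - 1)) + ℓ * (mu / r₃) := by
    field_simp
  rw [e1] at h1
  rw [e3] at h3
  have e2 : ℓ * (mu * (1 / r₂) + lam * xi * C ^ 3 * r₂ ^ 2)
      = ℓ * (lam * xi * C ^ 3 * r₂ ^ 2) + ℓ * (mu / r₂) := by ring
  rw [e2] at h2
  have emul : ℓ * (1 - (lam0 * s2 / (h * r₁)) * ((2 : ℝ) ^ (r₁ / B) - 1)
      - mu * (1 / r₁ + 1 / r₂ + 1 / r₃)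
      - (lam * s02 / (h * r₃)) * ((2 : ℝ) ^ (beta * r₃ / B) - 1)
      - lam * xi * C ^ 3 * r₂ ^ 2)
      = ℓ - (ℓ * ((lam0 * s2 / (h * r₁)) * ((2:ℝ) ^ (r₁ / B) - 1)) + ℓ * (mu / r₁))
        - (ℓ * ((lam * s02 / (h * r₃)) * ((2:ℝ) ^ (beta * r₃ / B) - 1)) + ℓ * (mu / r₃))
        - (ℓ * (lam * xi * C ^ 3 * r₂ ^ 2) + ℓ * (mu / r₂)) := by ring
  rw [emul]
  linarith

/-- Per-bit upper bound for the dual subproblem (Lemma 1, reduction step). -/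
theorem perBit_upper_bound
    (B beta lam0 lam mu xi C s2 s02 h : ℝ)
    (hB : 0 < B) (hbeta : 0 < beta) (hlam0 : 0 < lam0) (hlam : 0 < lam)
    (hmu : 0 < mu) (hxi : 0 < xi) (hC : 0 < C) (hs2 : 0 < s2)
    (hs02 : 0 < s02) (hh : 0 < h)
    (r₁ r₂ r₃ : ℝ) (hr₁ : 0 < r₁) (hr₂ : 0 < r₂) (hr₃ : 0 < r₃)
    (hstat : StationaryRates B beta lam0 lam mu xi C s2 s02 h r₁ r₂ r₃) :
    (∀ ℓ, 0 ≤ ℓ → ∀ t₁, 0 < t₁ → ∀ t₂, 0 < t₂ → ∀ t₃, 0 < t₃ →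
      Phi B beta lam0 lam mu xi C s2 s02 h ℓ t₁ t₂ t₃ ≤
        ℓ * Mgain B beta lam0 lam mu xi C s2 s02 h r₁ r₂ r₃) ∧
    (Mgain B beta lam0 lam mu xi C s2 s02 h r₁ r₂ r₃ ≤ 0 →
      ∀ ℓ, 0 ≤ ℓ → ∀ t₁, 0 < t₁ → ∀ t₂, 0 < t₂ → ∀ t₃, 0 < t₃ →
        Phi B beta lam0 lam mu xi C s2 s02 h ℓ t₁ t₂ t₃ ≤ 0) := by
  obtain ⟨hs1, hs2', hs3⟩ := hstat
  have main : ∀ ℓ, 0 ≤ ℓ → ∀ t₁, 0 < t₁ → ∀ t₂, 0 < t₂ → ∀ t₃, 0 < t₃ →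
      Phi B beta lam0 lam mu xi C s2 s02 h ℓ t₁ t₂ t₃ ≤
        ℓ * Mgain B beta lam0 lam mu xi C s2 s02 h r₁ r₂ r₃ := by
    intro ℓ hℓ t₁ ht₁ t₂ ht₂ t₃ ht₃
    simp only [Phi, Mgain]
    exact perBit_upper_bound' B beta lam0 lam mu xi C s2 s02 h hB hbeta hlam0 hlam
      hmu hxi hC hs2 hs02 hh r₁ r₂ r₃ hr₁ hr₂ hr₃ hs1 hs2' hs3 ℓ hℓ t₁ ht₁ t₂ ht₂ t₃ ht₃
  refine ⟨main, fun hM ℓ hℓ t₁ ht₁ t₂ ht₂ t₃ ht₃ => ?_⟩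
  have := main ℓ hℓ t₁ ht₁ t₂ ht₂ t₃ ht₃
  nlinarith [mul_nonpos_of_nonneg_of_nonpos hℓ hM]
end

section
/- Concavity of the dual subproblem objective: the function Φ is concave on the convex set {(ℓ, t₁, t₂, t₃) ∈ ℝ⁴ : ℓ ≥ 0, t₁ > 0, t₂ > 0, t₃ > 0}. -/
open Real

private lemma comboPos {a b t u : ℝ} (ha : 0 ≤ a) (hb : 0 ≤ b) (hab : a + b = 1)
    (ht : 0 < t) (hu : 0 < u) : 0 < a * t + b * u := by
  rcases ha.lt_or_eq with h | h
  · exact add_pos_of_pos_of_nonneg (mul_pos h ht) (mul_nonneg hb hu.le)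
  · have ha0 : a = 0 := h.symm
    have hb1 : b = 1 := by linarith
    simpa [ha0, hb1] using hu

private lemma convexOn_two_rpow : ConvexOn ℝ Set.univ fun x : ℝ => (2 : ℝ) ^ x := by
  refine ⟨convex_univ, fun x _ y _ a b ha hb hab => ?_⟩
  simp only [smul_eq_mul]
  rw [Real.rpow_def_of_pos two_pos, Real.rpow_def_of_pos two_pos,
    Real.rpow_def_of_pos two_pos]
  have hc := convexOn_exp.2 (Set.mem_univ (Real.log 2 * x)) (Set.mem_univ (Real.log 2 * y))
    ha hb hab
  simp only [smul_eq_mul] at hc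
  calc Real.exp (Real.log 2 * (a * x + b * y))
      = Real.exp (a * (Real.log 2 * x) + b * (Real.log 2 * y)) := by ring_nf
    _ ≤ a * Real.exp (Real.log 2 * x) + b * Real.exp (Real.log 2 * y) := hc

private lemma key1 {B t u x y a b : ℝ} (hB : 0 < B) (ht : 0 < t) (hu : 0 < u)
    (ha : 0 ≤ a) (hb : 0 ≤ b) (hab : a + b = 1) :
    (a * t + b * u) * (2 : ℝ) ^ ((a * x + b * y) / ((a * t + b * u) * B)) ≤
      a * (t * (2 : ℝ) ^ (x / (t * B))) + b * (u * (2 : ℝ) ^ (y / (u * B))) := by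
  have hT := comboPos ha hb hab ht hu
  have hw1 : 0 ≤ a * t / (a * t + b * u) := by positivity
  have hw2 : 0 ≤ b * u / (a * t + b * u) := by positivity
  have hws : a * t / (a * t + b * u) + b * u / (a * t + b * u) = 1 := by
    field_simp
  have hc := convexOn_two_rpow.2 (Set.mem_univ (x / (t * B))) (Set.mem_univ (y / (u * B)))
    hw1 hw2 hws
  simp only [smul_eq_mul] at hc
  have harg : a * t / (a * t + b * u) * (x / (t * B)) +
      b * u / (a * t + b * u) * (y / (u * B)) = (a * x + b * y) / ((a * t + b * u) * B) := by
    field_simp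
  rw [harg] at hc
  have h2 : (a * t + b * u) * (a * t / (a * t + b * u) * (2 : ℝ) ^ (x / (t * B)) +
      b * u / (a * t + b * u) * (2 : ℝ) ^ (y / (u * B))) =
      a * (t * (2 : ℝ) ^ (x / (t * B))) + b * (u * (2 : ℝ) ^ (y / (u * B))) := by
    field_simp
  have := mul_le_mul_of_nonneg_left hc hT.le
  rw [h2] at this
  exact this

private lemma key2 {t u x y a b : ℝ} (hx : 0 ≤ x) (hy : 0 ≤ y) (ht : 0 < t) (hu : 0 < u)
    (ha : 0 ≤ a) (hb : 0 ≤ b) (hab : a + b = 1) :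
    (a * x + b * y) ^ 3 / (a * t + b * u) ^ 2 ≤
      a * (x ^ 3 / t ^ 2) + b * (y ^ 3 / u ^ 2) := by
  have hT := comboPos ha hb hab ht hu
  have hw1 : 0 ≤ a * t / (a * t + b * u) := by positivity
  have hw2 : 0 ≤ b * u / (a * t + b * u) := by positivity
  have hws : a * t / (a * t + b * u) + b * u / (a * t + b * u) = 1 := by
    field_simp
  have hc := (convexOn_pow 3).2 (Set.mem_Ici.2 (div_nonneg hx ht.le))
    (Set.mem_Ici.2 (div_nonneg hy hu.le)) hw1 hw2 hws
  simp only [smul_eq_mul] at hc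
  have harg : a * t / (a * t + b * u) * (x / t) + b * u / (a * t + b * u) * (y / u) =
      (a * x + b * y) / (a * t + b * u) := by
    field_simp
  rw [harg] at hc
  have := mul_le_mul_of_nonneg_left hc hT.le
  have hL : (a * t + b * u) * ((a * x + b * y) / (a * t + b * u)) ^ 3 =
      (a * x + b * y) ^ 3 / (a * t + b * u) ^ 2 := by
    field_simp
  have hR : (a * t + b * u) * (a * t / (a * t + b * u) * (x / t) ^ 3 +
      b * u / (a * t + b * u) * (y / u) ^ 3) = a * (x ^ 3 / t ^ 2) + b * (y ^ 3 / u ^ 2) := by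
    field_simp
  rw [hL, hR] at this
  exact this

/-- Concavity of the dual subproblem objective `Φ` on
`{(ℓ, t₁, t₂, t₃) : ℓ ≥ 0, t₁ > 0, t₂ > 0, t₃ > 0}`. -/
theorem Phi_concaveOn
    (B beta lam0 lam mu xi C s2 s02 h : ℝ)
    (hB : 0 < B) (hbeta : 0 < beta) (hlam0 : 0 < lam0) (hlam : 0 < lam)
    (hmu : 0 < mu) (hxi : 0 < xi) (hC : 0 < C) (hs2 : 0 < s2)
    (hs02 : 0 < s02) (hh : 0 < h) :
    ConcaveOn ℝ
      {p : ℝ × ℝ × ℝ × ℝ | 0 ≤ p.1 ∧ 0 < p.2.1 ∧ 0 < p.2.2.1 ∧ 0 < p.2.2.2}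
      (fun p => Phi B beta lam0 lam mu xi C s2 s02 h p.1 p.2.1 p.2.2.1 p.2.2.2) := by
  constructor
  · intro p hp q hq a b ha hb hab
    obtain ⟨hp1, hp2, hp3, hp4⟩ := hp
    obtain ⟨hq1, hq2, hq3, hq4⟩ := hq
    refine ⟨?_, ?_, ?_, ?_⟩ <;>
      simp only [Set.mem_setOf_eq, Prod.fst_add, Prod.snd_add, Prod.smul_fst, Prod.smul_snd,
        smul_eq_mul]
    · exact add_nonneg (mul_nonneg ha hp1) (mul_nonneg hb hq1)
    · exact comboPos ha hb hab hp2 hq2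
    · exact comboPos ha hb hab hp3 hq3
    · exact comboPos ha hb hab hp4 hq4
  · intro p hp q hq a b ha hb hab
    obtain ⟨l1, t11, t12, t13⟩ := p
    obtain ⟨l2, t21, t22, t23⟩ := q
    obtain ⟨hp1, hp2, hp3, hp4⟩ := hp
    obtain ⟨hq1, hq2, hq3, hq4⟩ := hq
    simp only [Set.mem_setOf_eq] at hp1 hp2 hp3 hp4 hq1 hq2 hq3 hq4
    simp only [Phi, Prod.smul_mk, Prod.mk_add_mk, smul_eq_mul]
    have h1 := key1 (x := l1) (y := l2) hB hp2 hq2 ha hb hab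
    have h3 := key1 (x := beta * l1) (y := beta * l2) hB hp4 hq4 ha hb hab
    rw [show a * (beta * l1) + b * (beta * l2) = beta * (a * l1 + b * l2) by ring] at h3
    have h2 := key2 hp1 hq1 hp3 hq3 ha hb hab
    have c1 : (0 : ℝ) ≤ lam0 * s2 / h := by positivity
    have c3 : (0 : ℝ) ≤ lam * s02 / h := by positivity
    have c2 : (0 : ℝ) ≤ lam * xi * C ^ 3 := by positivity
    set X0 := (2:ℝ) ^ ((a * l1 + b * l2) / ((a * t11 + b * t21) * B)) with hX0
    set X1 := (2:ℝ) ^ (l1 / (t11 * B)) with hX1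
    set X2 := (2:ℝ) ^ (l2 / (t21 * B)) with hX2
    set Y0 := (2:ℝ) ^ (beta * (a * l1 + b * l2) / ((a * t13 + b * t23) * B)) with hY0
    set Y1 := (2:ℝ) ^ (beta * l1 / (t13 * B)) with hY1
    set Y2 := (2:ℝ) ^ (beta * l2 / (t23 * B)) with hY2
    clear_value X0 X1 X2 Y0 Y1 Y2
    clear hX0 hX1 hX2 hY0 hY1 hY2
    have h1c := mul_le_mul_of_nonneg_left h1 c1
    have h3c := mul_le_mul_of_nonneg_left h3 c3
    have h2c := mul_le_mul_of_nonneg_left h2 c2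
    ring_nf at h1c h3c h2c ⊢
    linarith [h1c, h3c, h2c]
end

section
/- Global optimality of the stationary offloading rate for the per-bit cost: let a > 0, μ > 0, B > 0, and define the per-bit cost c(r) = (a·(2^{r/B} − 1) + μ)/r for r > 0. If r* > 0 satisfies a·(2^{r*/B}·((r*·ln 2)/B − 1) + 1) = μ, then r* is the unique global minimizer of c on (0, ∞). -/
open Real Set

/-- Global optimality of the stationary offloading rate for the per-bit cost:
if `r* > 0` satisfies the KKT stationarity condition
`a (2^{r*/B} ((r* ln 2)/B - 1) + 1) = μ`, then `r*` is the unique global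
minimizer of `c(r) = (a (2^{r/B} - 1) + μ)/r` on `(0, ∞)`. -/
theorem stationary_rate_global_minimizer
    (a mu B rstar : ℝ) (ha : 0 < a) (hmu : 0 < mu) (hB : 0 < B)
    (hrstar : 0 < rstar)
    (hstat : a * ((2 : ℝ) ^ (rstar / B) * (rstar * Real.log 2 / B - 1) + 1) = mu) :
    (∀ r ∈ Ioi (0 : ℝ),
      (a * ((2 : ℝ) ^ (rstar / B) - 1) + mu) / rstar ≤
        (a * ((2 : ℝ) ^ (r / B) - 1) + mu) / r) ∧
    (∀ r ∈ Ioi (0 : ℝ),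
      (a * ((2 : ℝ) ^ (r / B) - 1) + mu) / r =
        (a * ((2 : ℝ) ^ (rstar / B) - 1) + mu) / rstar → r = rstar) := by
  have hL : 0 < Real.log 2 / B := div_pos (Real.log_pos one_lt_two) hB
  set L := Real.log 2 / B with hLdef
  have hE : ∀ r : ℝ, (2 : ℝ) ^ (r / B) = Real.exp (L * r) := by
    intro r
    rw [Real.rpow_def_of_pos two_pos, hLdef]
    congr 1
    field_simp
  have hstat' : a * (Real.exp (L * rstar) * (L * rstar - 1) + 1) = mu := by
    rw [← hstat, hE]
    congr 2
    rw [hLdef]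
    ring
  have key : ∀ r ∈ Ioi (0 : ℝ), r ≠ rstar →
      (a * ((2 : ℝ) ^ (rstar / B) - 1) + mu) / rstar <
        (a * ((2 : ℝ) ^ (r / B) - 1) + mu) / r := by
    intro r hr hne
    have hr0 : 0 < r := mem_Ioi.mp hr
    rw [hE, hE]
    have ht : L * (r - rstar) ≠ 0 := mul_ne_zero (ne_of_gt hL) (sub_ne_zero.mpr hne)
    have hexp := Real.add_one_lt_exp ht
    have hsplit : Real.exp (L * r) = Real.exp (L * rstar) * Real.exp (L * (r - rstar)) := by
      rw [← Real.exp_add]; congr 1; ring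
    have hgt : Real.exp (L * rstar) * (L * (r - rstar) + 1) < Real.exp (L * r) := by
      rw [hsplit]
      exact mul_lt_mul_of_pos_left hexp (Real.exp_pos _)
    rw [div_lt_div_iff₀ hrstar hr0]
    nlinarith [mul_lt_mul_of_pos_left hgt (mul_pos ha hrstar), Real.exp_pos (L * rstar),
      mul_pos ha hrstar]
  constructor
  · intro r hr
    by_cases h : r = rstar
    · subst h; exact le_refl _
    · exact le_of_lt (key r hr h)
  · intro r hr heq
    by_contra h
    exact absurd heq.symm (ne_of_lt (key r hr h))
end

section
/- Convexity of the user's energy-neutrality constraint set: let K be a positive integer, let B > 0, c ≥ 0, E ∈ ℝ, and let a₁, …, a_K > 0. Then the set of tuples (ℓ₀, ℓ₁, …, ℓ_K, t₁, …, t_K) ∈ ℝ^{2K+1} with ℓ_k ≥ 0 for all k, t_k > 0 for all k, and ∑_{k=1}^{K} a_k · t_k · (2^{ℓ_k/(t_k B)} − 1) + c·ℓ₀³ ≤ E is a convex subset of ℝ^{2K+1}. -/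
/-!
Each offloading energy `t (2^(ℓ / (t B)) - 1)` is the perspective `t g(ℓ / t)` of the convex
function `g x = 2^(x / B) - 1`, and perspectives of convex functions are jointly convex. Together
with the convexity of `ℓ₀ ↦ c ℓ₀³` on `ℓ₀ ≥ 0`, the constraint set is a sublevel set of a convex
function on a convex domain.
-/

open Real Set Finset

theorem ConvexOn.finset_sum {𝕜 E ι : Type*} [Field 𝕜] [LinearOrder 𝕜] [IsStrictOrderedRing 𝕜]
    [AddCommGroup E] [Module 𝕜 E] {s : Set E} (hs : Convex 𝕜 s) (t : Finset ι) {f : ι → E → 𝕜}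
    (hf : ∀ i ∈ t, ConvexOn 𝕜 s (f i)) : ConvexOn 𝕜 s fun x ↦ ∑ i ∈ t, f i x := by
  classical
  induction t using Finset.induction_on with
  | empty => simpa using convexOn_const 0 hs
  | insert i t hi ih =>
    simp only [Finset.sum_insert hi]
    exact (hf i (mem_insert_self i t)).add (ih fun j hj ↦ hf j (mem_insert_of_mem hj))

theorem ConvexOn.perspective {𝕜 E : Type*} [Field 𝕜] [LinearOrder 𝕜] [IsStrictOrderedRing 𝕜]
    [AddCommGroup E] [Module 𝕜 E] {s : Set E} {f : E → 𝕜} (hf : ConvexOn 𝕜 s f) :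
    ConvexOn 𝕜 {p : E × 𝕜 | 0 < p.2 ∧ p.2⁻¹ • p.1 ∈ s} fun p ↦ p.2 * f (p.2⁻¹ • p.1) := by
  have combination : ∀ ⦃x y : E⦄ ⦃t u : 𝕜⦄, 0 < t → 0 < u → t⁻¹ • x ∈ s → u⁻¹ • y ∈ s →
      ∀ ⦃a b : 𝕜⦄, 0 ≤ a → 0 ≤ b → a + b = 1 →
      0 < a * t + b * u ∧ (a * t + b * u)⁻¹ • (a • x + b • y) ∈ s ∧
      (a * t + b * u) * f ((a * t + b * u)⁻¹ • (a • x + b • y)) ≤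
        a * (t * f (t⁻¹ • x)) + b * (u * f (u⁻¹ • y)) := by
    intro x y t u ht hu hx hy a b ha hb hab
    set T := a * t + b * u
    have hT : 0 < T := convex_Ioi (0 : 𝕜) ht hu ha hb hab
    -- `T⁻¹ • (a • x + b • y)` is the convex combination of `t⁻¹ • x` and `u⁻¹ • y`
    -- with weights `a t / T` and `b u / T`
    have hcomb : T⁻¹ • (a • x + b • y) = (a * t / T) • (t⁻¹ • x) + (b * u / T) • (u⁻¹ • y) := by
      simp only [smul_add, smul_smul]
      congr 2 <;> field_simp
    have hw : a * t / T + b * u / T = 1 := by rw [← add_div, div_self hT.ne']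
    refine ⟨hT, hcomb ▸ hf.1 hx hy (by positivity) (by positivity) hw, ?_⟩
    calc T * f (T⁻¹ • (a • x + b • y))
        ≤ T * ((a * t / T) • f (t⁻¹ • x) + (b * u / T) • f (u⁻¹ • y)) := by
          rw [hcomb]
          exact mul_le_mul_of_nonneg_left (hf.2 hx hy (by positivity) (by positivity) hw) hT.le
      _ = a * (t * f (t⁻¹ • x)) + b * (u * f (u⁻¹ • y)) := by
          simp only [smul_eq_mul]
          field_simp
  refine ⟨?_, ?_⟩
  · rintro ⟨x, t⟩ ⟨ht, hx⟩ ⟨y, u⟩ ⟨hu, hy⟩ a b ha hb hab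
    obtain ⟨hT, hmem, -⟩ := combination ht hu hx hy ha hb hab
    exact ⟨by simpa using hT, by simpa using hmem⟩
  · rintro ⟨x, t⟩ ⟨ht, hx⟩ ⟨y, u⟩ ⟨hu, hy⟩ a b ha hb hab
    simpa using (combination ht hu hx hy ha hb hab).2.2

theorem convexOn_offloadEnergy {B : ℝ} (hB : 0 < B) :
    ConvexOn ℝ {p : ℝ × ℝ | 0 < p.2} fun p ↦ p.2 * ((2 : ℝ) ^ (p.1 / (p.2 * B)) - 1) := by
  have hg : ConvexOn ℝ univ fun x : ℝ ↦ (2 : ℝ) ^ (B⁻¹ * x) - 1 :=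
    ((convexOn_rpow_left two_pos).comp_linearMap (LinearMap.mul ℝ ℝ B⁻¹)).add_const (-1)
  refine (hg.perspective.subset (fun p hp ↦ ⟨hp, mem_univ _⟩) ?_).congr fun p _ ↦ ?_
  · exact convex_halfSpace_gt (LinearMap.snd ℝ ℝ ℝ).isLinear 0
  · simp only [smul_eq_mul]
    congr 3
    field_simp

theorem energy_neutrality_constraint_convex_general
    (K : ℕ) (B : ℝ) (hB : 0 < B) (c : ℝ) (hc : 0 ≤ c) (E : ℝ)
    (a : Fin K → ℝ) (ha : ∀ k, 0 < a k) :
    Convex ℝ {p : ℝ × (Fin K → ℝ) × (Fin K → ℝ) |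
      0 ≤ p.1 ∧ (∀ k, 0 ≤ p.2.1 k) ∧ (∀ k, 0 < p.2.2 k) ∧
      ∑ k, a k * p.2.2 k * ((2 : ℝ) ^ (p.2.1 k / (p.2.2 k * B)) - 1) +
        c * p.1 ^ 3 ≤ E} := by
  set D := {p : ℝ × (Fin K → ℝ) × (Fin K → ℝ) |
      0 ≤ p.1 ∧ (∀ k, 0 ≤ p.2.1 k) ∧ (∀ k, 0 < p.2.2 k)}
  have hD : Convex ℝ D := by
    rintro p ⟨hp₀, hpℓ, hpt⟩ q ⟨hq₀, hqℓ, hqt⟩ α β hα hβ hαβ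
    exact ⟨convex_Ici (0 : ℝ) hp₀ hq₀ hα hβ hαβ,
      fun k ↦ convex_Ici (0 : ℝ) (hpℓ k) (hqℓ k) hα hβ hαβ,
      fun k ↦ convex_Ioi (0 : ℝ) (hpt k) (hqt k) hα hβ hαβ⟩
  have hcube : ConvexOn ℝ D fun p ↦ p.1 ^ 3 :=
    ((convexOn_pow (𝕜 := ℝ) 3).comp_linearMap (LinearMap.fst ℝ ℝ _)).subset (fun p hp ↦ hp.1) hD
  have henergy (k : Fin K) :
      ConvexOn ℝ D fun p ↦ a k * p.2.2 k * ((2 : ℝ) ^ (p.2.1 k / (p.2.2 k * B)) - 1) := by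
    have := (((convexOn_offloadEnergy hB).comp_linearMap
      ((LinearMap.proj k).prodMap (LinearMap.proj k) ∘ₗ LinearMap.snd ℝ ℝ _)).subset
      (fun p hp ↦ hp.2.2 k) hD).smul (ha k).le
    simpa [mul_assoc] using this
  simpa [D, and_assoc] using
    ((ConvexOn.finset_sum hD univ fun k _ ↦ henergy k).add (hcube.smul hc)).convex_le E

/-- Convexity of the user's energy-neutrality constraint set: for `B > 0`,
`c ≥ 0`, `E ∈ ℝ`, and `a_k > 0`, the set of tuples `(ℓ₀, (ℓ_k), (t_k))` with
`ℓ₀ ≥ 0`, `ℓ_k ≥ 0`, `t_k > 0`, and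
`∑_k a_k t_k (2^{ℓ_k/(t_k B)} - 1) + c ℓ₀³ ≤ E` is convex. -/
theorem energy_neutrality_constraint_convex
    (K : ℕ) (hK : 0 < K) (B : ℝ) (hB : 0 < B) (c : ℝ) (hc : 0 ≤ c) (E : ℝ)
    (a : Fin K → ℝ) (ha : ∀ k, 0 < a k) :
    Convex ℝ {p : ℝ × (Fin K → ℝ) × (Fin K → ℝ) |
      0 ≤ p.1 ∧ (∀ k, 0 ≤ p.2.1 k) ∧ (∀ k, 0 < p.2.2 k) ∧
      ∑ k, a k * p.2.2 k * ((2 : ℝ) ^ (p.2.1 k / (p.2.2 k * B)) - 1) +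
        c * p.1 ^ 3 ≤ E} :=
  energy_neutrality_constraint_convex_general K B hB c hc E a ha
end
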